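/- For every finite directed graph Γ on Fin n, the normalized cycle polytope p_*(Γ) equals the union over all N ≥ 1 of the normalized closed path polytopes p_N(Γ), and also equals the convex hull of the normalized weight matrices w(s) of all closed paths s of any length in Γ. -/

import Mathlib

/-- `s : ZMod N → V` is a closed path of length `N` in the directed graph `Γ`:
every consecutive pair of nodes is an edge of `Γ`. -/
def IsClosedPath {V : Type*} (Γ : V → V → Prop) (N : ℕ) (s : ZMod N → V) : Prop :=
  ∀ i : ZMod N, Γ (s i) (s (i + 1))

/-- A simple cycle of length `k` in `Γ`: a closed path of positive length with
pairwise distinct nodes. -/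
def IsSimpleCycle {V : Type*} (Γ : V → V → Prop) (k : ℕ) (c : ZMod k → V) : Prop :=
  0 < k ∧ IsClosedPath Γ k c ∧ Function.Injective c

/-- The weight matrix `W(s)` of `s : ZMod N → Fin n`: its `(i,j)` entry counts the
number of indices `k` with `(s k, s (k+1)) = (i, j)`. -/
noncomputable def weightMatrix {n : ℕ} (N : ℕ) (s : ZMod N → Fin n) :
    Matrix (Fin n) (Fin n) ℝ :=
  Matrix.of fun i j => (Nat.card {k : ZMod N // s k = i ∧ s (k + 1) = j} : ℝ)

/-- The normalized closed path polytope `p_N(Γ)`: the convex hull of the normalized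
weight matrices `w(s) = W(s)/N` of all closed paths of length `N` in `Γ`. -/
noncomputable def pathPolytope {n : ℕ} (Γ : Fin n → Fin n → Prop) (N : ℕ) :
    Set (Matrix (Fin n) (Fin n) ℝ) :=
  convexHull ℝ
    {M | ∃ s : ZMod N → Fin n, IsClosedPath Γ N s ∧ M = (N : ℝ)⁻¹ • weightMatrix N s}

/-- The normalized cycle polytope `p_*(Γ)`: the convex hull of the normalized weight
matrices `w(c) = W(c)/ℓ(c)` of all simple cycles of `Γ`. -/
noncomputable def cyclePolytope {n : ℕ} (Γ : Fin n → Fin n → Prop) :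
    Set (Matrix (Fin n) (Fin n) ℝ) :=
  convexHull ℝ
    {M | ∃ (k : ℕ) (c : ZMod k → Fin n), IsSimpleCycle Γ k c ∧
      M = (k : ℝ)⁻¹ • weightMatrix k c}


private lemma natCast_zmod_inj {N : ℕ} [NeZero N] {u v : ℕ} (hu : u < N) (hv : v < N)
    (h : (u : ZMod N) = v) : u = v := by
  rw [← Nat.mod_eq_of_lt hu, ← Nat.mod_eq_of_lt hv, ← ZMod.val_natCast, ← ZMod.val_natCast, h]

private lemma card_split {N d e : ℕ} [NeZero N] [NeZero d] [NeZero e]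
    (hde : d + e = N) (a : ℕ) (p : ZMod N → Prop) :
    Nat.card {k : ZMod N // p k} =
      Nat.card {m : ZMod d // p ((a + m.val : ℕ) : ZMod N)} +
      Nat.card {m : ZMod e // p ((a + d + m.val : ℕ) : ZMod N)} := by
  have hdN : d < N := by have := Nat.pos_of_ne_zero (NeZero.ne e); omega
  set φ : ZMod d ⊕ ZMod e → ZMod N :=
    Sum.elim (fun m => ((a + m.val : ℕ) : ZMod N)) (fun m => ((a + d + m.val : ℕ) : ZMod N))
    with hφ
  have key : ∀ u v : ℕ, u < N → v < N → ((a + u : ℕ) : ZMod N) = ((a + v : ℕ) : ZMod N) → u = v := by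
    intro u v hu hv h
    push_cast at h
    have h2 : ((u : ℕ) : ZMod N) = ((v : ℕ) : ZMod N) := by
      have := add_left_cancel h
      exact_mod_cast this
    exact natCast_zmod_inj hu hv h2
  have hinj : Function.Injective φ := by
    rintro (m | m) (m' | m') h <;> simp only [hφ, Sum.elim_inl, Sum.elim_inr] at h
    · have h1 : m.val = m'.val :=
        key _ _ (lt_of_lt_of_le m.val_lt hdN.le) (lt_of_lt_of_le m'.val_lt hdN.le) h
      exact congrArg Sum.inl (ZMod.val_injective _ h1)
    · have hm' : d + m'.val < N := by have := m'.val_lt; omega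
      have h1 : m.val = d + m'.val := key _ _ (lt_of_lt_of_le m.val_lt hdN.le) hm' (by
        rw [h]; ring_nf)
      exact absurd h1 (by have := m.val_lt; omega)
    · have hm : d + m.val < N := by have := m.val_lt; omega
      have h1 : d + m.val = m'.val := key _ _ hm (lt_of_lt_of_le m'.val_lt hdN.le) (by
        rw [← h]; ring_nf)
      exact absurd h1 (by have := m'.val_lt; omega)
    · have hm : d + m.val < N := by have := m.val_lt; omega
      have hm' : d + m'.val < N := by have := m'.val_lt; omega
      have h1 : d + m.val = d + m'.val := key _ _ hm hm' (by
        have : ((a + (d + m.val) : ℕ) : ZMod N) = ((a + (d + m'.val) : ℕ) : ZMod N) := by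
          push_cast at h ⊢; linear_combination h
        exact this)
      exact congrArg Sum.inr (ZMod.val_injective _ (by omega))
  have hbij : Function.Bijective φ := by
    rw [Fintype.bijective_iff_injective_and_card]
    refine ⟨hinj, ?_⟩
    simp [ZMod.card, hde]
  calc Nat.card {k : ZMod N // p k}
      = Nat.card {y : ZMod d ⊕ ZMod e // p (φ y)} :=
        (Nat.card_congr ((Equiv.ofBijective φ hbij).subtypeEquiv (fun y => Iff.rfl))).symm
    _ = _ := by
        rw [Nat.card_congr (Equiv.subtypeSum (p := fun y => p (φ y))), Nat.card_sum]
        rfl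

private def seg {V : Type*} {N : ℕ} (s : ZMod N → V) (a d : ℕ) : ZMod d → V :=
  fun m => s ((a + m.val : ℕ) : ZMod N)

private lemma seg_succ {V : Type*} {N : ℕ} (s : ZMod N → V) (a d : ℕ) [NeZero d]
    (hcut : s ((a + d : ℕ) : ZMod N) = s ((a : ℕ) : ZMod N)) (m : ZMod d) :
    seg s a d (m + 1) = s ((a + m.val + 1 : ℕ) : ZMod N) := by
  have h1 : (m + 1 : ZMod d) = ((m.val + 1 : ℕ) : ZMod d) := by
    push_cast [ZMod.natCast_rightInverse m]
    rfl
  have h2 : (m + 1 : ZMod d).val = (m.val + 1) % d := by rw [h1, ZMod.val_natCast]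
  rcases eq_or_lt_of_le (Nat.succ_le_of_lt m.val_lt) with h | h
  · have : (m + 1 : ZMod d).val = 0 := by rw [h2, show m.val + 1 = d from h, Nat.mod_self]
    show s ((a + (m+1).val : ℕ) : ZMod N) = _
    rw [this]
    rw [show a + m.val + 1 = a + d by omega, hcut]
    norm_num
  · have : (m + 1 : ZMod d).val = m.val + 1 := by rw [h2, Nat.mod_eq_of_lt h]
    show s ((a + (m+1).val : ℕ) : ZMod N) = _
    rw [this, ← Nat.add_assoc]

private lemma seg_closed {V : Type*} {Γ : V → V → Prop} {N : ℕ} {s : ZMod N → V}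
    (hs : IsClosedPath Γ N s) (a d : ℕ) [NeZero d]
    (hcut : s ((a + d : ℕ) : ZMod N) = s ((a : ℕ) : ZMod N)) :
    IsClosedPath Γ d (seg s a d) := by
  intro m
  rw [seg_succ s a d hcut m]
  have h : ((a + m.val + 1 : ℕ) : ZMod N) = ((a + m.val : ℕ) : ZMod N) + 1 := by push_cast; ring
  rw [h]
  exact hs _

private lemma weight_split {n N : ℕ} [NeZero N] (s : ZMod N → Fin n) (a d : ℕ)
    (hd : 0 < d) (hdN : d < N)
    (hcut : s ((a + d : ℕ) : ZMod N) = s ((a : ℕ) : ZMod N)) :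
    weightMatrix N s = weightMatrix d (seg s a d) + weightMatrix (N - d) (seg s (a + d) (N - d)) := by
  haveI : NeZero d := ⟨hd.ne'⟩
  haveI : NeZero (N - d) := ⟨by omega⟩
  have hcut2 : s ((a + d + (N - d) : ℕ) : ZMod N) = s ((a + d : ℕ) : ZMod N) := by
    rw [show a + d + (N - d) = a + N by omega, hcut]
    have : ((a + N : ℕ) : ZMod N) = ((a : ℕ) : ZMod N) := by push_cast; simp
    rw [this]
  ext i j
  show (Nat.card {k : ZMod N // s k = i ∧ s (k + 1) = j} : ℝ) = _
  rw [card_split (d := d) (e := N - d) (by omega) a (fun k => s k = i ∧ s (k + 1) = j)]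
  have e1 : Nat.card {m : ZMod d // s ((a + m.val : ℕ) : ZMod N) = i ∧
        s (((a + m.val : ℕ) : ZMod N) + 1) = j}
      = Nat.card {m : ZMod d // seg s a d m = i ∧ seg s a d (m + 1) = j} := by
    apply Nat.card_congr
    apply Equiv.subtypeEquivRight
    intro m
    rw [seg_succ s a d hcut m]
    have h : ((a + m.val : ℕ) : ZMod N) + 1 = ((a + m.val + 1 : ℕ) : ZMod N) := by push_cast; ring
    rw [h]
    exact Iff.rfl
  have e2 : Nat.card {m : ZMod (N - d) // s ((a + d + m.val : ℕ) : ZMod N) = i ∧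
        s (((a + d + m.val : ℕ) : ZMod N) + 1) = j}
      = Nat.card {m : ZMod (N - d) // seg s (a + d) (N - d) m = i ∧
          seg s (a + d) (N - d) (m + 1) = j} := by
    apply Nat.card_congr
    apply Equiv.subtypeEquivRight
    intro m
    rw [seg_succ s (a + d) (N - d) hcut2 m]
    have h : ((a + d + m.val : ℕ) : ZMod N) + 1 = ((a + d + m.val + 1 : ℕ) : ZMod N) := by
      push_cast; ring
    rw [h]
    exact Iff.rfl
  rw [e1, e2]
  push_cast
  rfl

/-- Key lemma: every normalized closed-path weight matrix lies in the cycle polytope. -/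
private lemma key_mem {n : ℕ} (Γ : Fin n → Fin n → Prop) :
    ∀ N : ℕ, 0 < N → ∀ s : ZMod N → Fin n, IsClosedPath Γ N s →
      (N : ℝ)⁻¹ • weightMatrix N s ∈ cyclePolytope Γ := by
  intro N
  induction N using Nat.strong_induction_on with
  | _ N ih =>
    intro hN s hs
    by_cases hinj : Function.Injective s
    · exact subset_convexHull ℝ _ ⟨N, s, ⟨hN, hs, hinj⟩, rfl⟩
    · haveI : NeZero N := ⟨hN.ne'⟩
      rw [Function.Injective] at hinj
      push_neg at hinj
      obtain ⟨i, j, hij, hne⟩ := hinj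
      have hvalne : i.val ≠ j.val := fun h => hne (ZMod.val_injective _ h)
      obtain ⟨A, B, hAB, hBN, hsAB⟩ :
          ∃ A B : ℕ, A < B ∧ B < N ∧ s ((A : ℕ) : ZMod N) = s ((B : ℕ) : ZMod N) := by
        rcases lt_or_gt_of_ne hvalne with h | h
        · exact ⟨i.val, j.val, h, j.val_lt, by
            rw [ZMod.natCast_rightInverse i, ZMod.natCast_rightInverse j]; exact hij⟩
        · exact ⟨j.val, i.val, h, i.val_lt, by
            rw [ZMod.natCast_rightInverse i, ZMod.natCast_rightInverse j]; exact hij.symm⟩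
      set d : ℕ := B - A with hdDef
      have hd : 0 < d := by omega
      have hdN : d < N := by omega
      haveI : NeZero d := ⟨hd.ne'⟩
      haveI : NeZero (N - d) := ⟨by omega⟩
      have hcut : s ((A + d : ℕ) : ZMod N) = s ((A : ℕ) : ZMod N) := by
        rw [show A + d = B by omega]; exact hsAB.symm
      have hcut2 : s ((A + d + (N - d) : ℕ) : ZMod N) = s ((A + d : ℕ) : ZMod N) := by
        rw [show A + d + (N - d) = A + N by omega, hcut]
        have : ((A + N : ℕ) : ZMod N) = ((A : ℕ) : ZMod N) := by push_cast; simp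
        rw [this]
      have m1 := ih d hdN hd (seg s A d) (seg_closed hs A d hcut)
      have m2 := ih (N - d) (by omega) (by omega) (seg s (A + d) (N - d))
        (seg_closed hs (A + d) (N - d) hcut2)
      have hNr : (N : ℝ) ≠ 0 := Nat.cast_ne_zero.2 hN.ne'
      have hdr : (d : ℝ) ≠ 0 := Nat.cast_ne_zero.2 hd.ne'
      have her : ((N - d : ℕ) : ℝ) ≠ 0 := Nat.cast_ne_zero.2 (by omega)
      have hcomb : (N : ℝ)⁻¹ • weightMatrix N s
          = ((d : ℝ) / N) • ((d : ℝ)⁻¹ • weightMatrix d (seg s A d))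
            + (((N - d : ℕ) : ℝ) / N) •
              (((N - d : ℕ) : ℝ)⁻¹ • weightMatrix (N - d) (seg s (A + d) (N - d))) := by
        rw [weight_split s A d hd hdN hcut, smul_add, smul_smul, smul_smul]
        congr 1
        · congr 1; field_simp
        · congr 1; field_simp
      rw [hcomb]
      have hsum : (d : ℝ) / N + ((N - d : ℕ) : ℝ) / N = 1 := by
        rw [← add_div, ← Nat.cast_add, show d + (N - d) = N by omega]
        field_simp
      exact (convex_convexHull ℝ _) m1 m2 (by positivity) (by positivity) hsum


private lemma natCast_zmod_inj' {N : ℕ} [NeZero N] {u v : ℕ} (hu : u < N) (hv : v < N)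
    (h : (u : ZMod N) = v) : u = v := by
  rw [← Nat.mod_eq_of_lt hu, ← Nat.mod_eq_of_lt hv, ← ZMod.val_natCast, ← ZMod.val_natCast, h]

private def prodSubtypeSnd {α β : Type*} (p : β → Prop) :
    {q : α × β // p q.2} ≃ α × {b // p b} :=
  ⟨fun x => (x.1.1, ⟨x.1.2, x.2⟩), fun y => ⟨(y.1, y.2.1), y.2.2⟩, fun _ => rfl, fun _ => rfl⟩

private lemma path_subset_mul {n : ℕ} (Γ : Fin n → Fin n → Prop) (N K : ℕ)
    (hN : 0 < N) (hK : 0 < K) : pathPolytope Γ N ⊆ pathPolytope Γ (N * K) := by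
  haveI : NeZero N := ⟨hN.ne'⟩
  haveI : NeZero K := ⟨hK.ne'⟩
  haveI : NeZero (N * K) := ⟨by positivity⟩
  apply convexHull_mono
  rintro _ ⟨s, hs, rfl⟩
  set f : ZMod (N * K) →+* ZMod N := ZMod.castHom (dvd_mul_right N K) (ZMod N) with hf
  -- the equivalence
  set ψ : ZMod K × ZMod N → ZMod (N * K) :=
    (fun q => ((q.2.val + N * q.1.val : ℕ) : ZMod (N * K))) with hψ
  have hlt : ∀ q : ZMod K × ZMod N, q.2.val + N * q.1.val < N * K := by
    intro q
    have h1 : N * q.1.val ≤ N * (K - 1) := Nat.mul_le_mul_left N (by have := q.1.val_lt; omega)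
    have h2 : N * (K - 1) + N = N * K := by
      obtain ⟨m, rfl⟩ : ∃ m, K = m + 1 := ⟨K - 1, by omega⟩
      simp [Nat.mul_add, Nat.add_sub_cancel]
    have := q.2.val_lt
    omega
  have hinj : Function.Injective ψ := by
    intro q q' h
    simp only [hψ] at h
    have hnat : q.2.val + N * q.1.val = q'.2.val + N * q'.1.val :=
      natCast_zmod_inj' (hlt q) (hlt q') h
    have hmod := congrArg (· % N) hnat
    simp only [Nat.add_mul_mod_self_left, Nat.mod_eq_of_lt q.2.val_lt,
      Nat.mod_eq_of_lt q'.2.val_lt] at hmod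
    have ht : q.1.val = q'.1.val := Nat.eq_of_mul_eq_mul_left hN (by omega)
    exact Prod.ext (ZMod.val_injective _ ht) (ZMod.val_injective _ hmod)
  have hbij : Function.Bijective ψ := by
    rw [Fintype.bijective_iff_injective_and_card]
    exact ⟨hinj, by simp [ZMod.card, Nat.mul_comm]⟩
  have hfψ : ∀ q : ZMod K × ZMod N, f (ψ q) = q.2 := by
    intro q
    simp only [hψ, hf, map_natCast]
    push_cast
    simp [ZMod.natCast_self, ZMod.natCast_rightInverse q.2]
  refine ⟨s ∘ f, ?_, ?_⟩
  · intro k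
    show Γ (s (f k)) (s (f (k + 1)))
    rw [map_add, map_one]
    exact hs _
  · have hW : weightMatrix (N * K) (s ∘ f) = (K : ℝ) • weightMatrix N s := by
      ext i j
      simp only [weightMatrix, Matrix.of_apply, Matrix.smul_apply, smul_eq_mul,
        Function.comp_apply]
      have hstep : ∀ k : ZMod (N * K), f (k + 1) = f k + 1 := fun k => by rw [map_add, map_one]
      simp only [hstep]
      have e1 : Nat.card {k : ZMod (N * K) // s (f k) = i ∧ s (f k + 1) = j}
          = Nat.card {q : ZMod K × ZMod N // s q.2 = i ∧ s (q.2 + 1) = j} := by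
        refine (Nat.card_congr ?_).symm
        refine ((Equiv.ofBijective ψ hbij).subtypeEquiv (fun q => ?_)).symm.symm
        rw [show f ((Equiv.ofBijective ψ hbij) q) = q.2 from hfψ q]
      rw [e1, Nat.card_congr (prodSubtypeSnd (fun k : ZMod N => s k = i ∧ s (k + 1) = j)),
        Nat.card_prod, Nat.card_zmod]
      push_cast
      ring
    rw [hW, smul_smul]
    have : ((N * K : ℕ) : ℝ)⁻¹ * (K : ℝ) = (N : ℝ)⁻¹ := by
      push_cast
      field_simp
    rw [this]

/-- the normalized cycle polytope `p_*(Γ)` equals the union over all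
`N ≥ 1` of the normalized closed path polytopes `p_N(Γ)`, and also equals the convex
hull of the normalized weight matrices of all closed paths of any length in `Γ`. -/
theorem cyclePolytope_eq_iUnion_pathPolytope {n : ℕ} (Γ : Fin n → Fin n → Prop) :
    (cyclePolytope Γ = ⋃ N ∈ {N : ℕ | 1 ≤ N}, pathPolytope Γ N) ∧
    cyclePolytope Γ = convexHull ℝ
      {M | ∃ (N : ℕ), 1 ≤ N ∧ ∃ s : ZMod N → Fin n,
        IsClosedPath Γ N s ∧ M = (N : ℝ)⁻¹ • weightMatrix N s} := by
  have hUconv : Convex ℝ (⋃ N ∈ {N : ℕ | 1 ≤ N}, pathPolytope Γ N) := by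
    intro x hx y hy a b ha hb hab
    simp only [Set.mem_iUnion, Set.mem_setOf_eq, exists_prop] at hx hy ⊢
    obtain ⟨N, hN, hx⟩ := hx
    obtain ⟨M, hM, hy⟩ := hy
    refine ⟨N * M, Nat.one_le_iff_ne_zero.2 (by positivity), ?_⟩
    have hx' : x ∈ pathPolytope Γ (N * M) := path_subset_mul Γ N M hN hM hx
    have hy' : y ∈ pathPolytope Γ (N * M) := by
      have := path_subset_mul Γ M N hM hN hy
      rwa [Nat.mul_comm] at this
    exact (convex_convexHull ℝ _) hx' hy' ha hb hab
  constructor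
  · apply Set.Subset.antisymm
    · apply convexHull_min _ hUconv
      rintro _ ⟨k, c, ⟨hk, hclosed, hinj⟩, rfl⟩
      exact Set.mem_biUnion hk (subset_convexHull ℝ _ ⟨c, hclosed, rfl⟩)
    · refine Set.iUnion₂_subset fun N hN => ?_
      apply convexHull_min _ (convex_convexHull ℝ _)
      rintro _ ⟨s, hs, rfl⟩
      exact key_mem Γ N hN s hs
  · apply Set.Subset.antisymm
    · apply convexHull_mono
      rintro _ ⟨k, c, ⟨hk, hclosed, hinj⟩, rfl⟩
      exact ⟨k, hk, c, hclosed, rfl⟩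
    · apply convexHull_min _ (convex_convexHull ℝ _)
      rintro _ ⟨N, hN, s, hs, rfl⟩
      exact key_mem Γ N hN s hs
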